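/- The connected component relation on a left regular band S is the least congruence on S whose quotient is a left zero semigroup: it is such a congruence, and it is contained in every congruence whose quotient is a left zero semigroup. -/
import Mathlib


/-- The connected component relation is the least congruence on a left regular band
whose quotient is a left zero semigroup. -/
theorem lrb_connected_component_least (S : Type*) [Semigroup S]
    (idem : ∀ x : S, x * x = x) (lrb : ∀ x y : S, x * y * x = x * y) :
    ((∀ a b c d : S, Relation.EqvGen (fun x y : S => y * x = x) a b →
        Relation.EqvGen (fun x y : S => y * x = x) c d →
        Relation.EqvGen (fun x y : S => y * x = x) (a * c) (b * d)) ∧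
      (∀ x y : S, Relation.EqvGen (fun x y : S => y * x = x) (x * y) x)) ∧
    (∀ c : S → S → Prop, Equivalence c →
      (∀ a b a' b' : S, c a b → c a' b' → c (a * a') (b * b')) →
      (∀ x y : S, c (x * y) x) →
      ∀ x y : S, Relation.EqvGen (fun a b : S => b * a = a) x y → c x y) := by
  have absorb : ∀ x y : S, Relation.EqvGen (fun x y : S => y * x = x) (x * y) x := by
    intro x y
    exact Relation.EqvGen.rel _ _ (by rw [← mul_assoc, idem])
  refine ⟨⟨?_, absorb⟩, ?_⟩
  · intro a b c d hab _
    exact ((absorb a c).trans _ _ _ hab).trans _ _ _ ((absorb b d).symm _ _)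
  · intro c hc hmul habs x y h
    induction h with
    | rel u v huv => have := habs v u; rw [huv] at this; exact this
    | refl u => exact hc.refl u
    | symm u v _ ih => exact hc.symm ih
    | trans u v w _ _ ih1 ih2 => exact hc.trans ih1 ih2
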